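/- The set of interpretations over A forms a two-sided ideal of the magma of answer set programs under composition: for every interpretation I and program P, both I ∘ P and P ∘ I are interpretations. -/
import Mathlib


open Classical Finset

/-- A rule of an answer set program: a head atom, a set of positive body atoms,
and a set of negated body atoms. -/
structure Rule (α : Type*) where
  head : α
  pos : Finset α
  neg : Finset α
deriving DecidableEq

instance {α : Type*} [DecidableEq α] [Fintype α] : Fintype (Rule α) :=
  Fintype.ofEquiv (α × Finset α × Finset α)
    { toFun := fun x => ⟨x.1, x.2.1, x.2.2⟩
      invFun := fun r => (r.head, r.pos, r.neg)
      left_inv := fun _ => rfl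
      right_inv := fun _ => rfl }

variable {α : Type*} [Fintype α] [DecidableEq α]

/-- Program-level negation (the tf/∨/De Morgan construction):
for each head atom `a`, either no rule of `R` has head `a` (then the fact `a` is produced),
or one negated literal is chosen from the body of each rule of `R` with head `a`
(De Morgan + distributivity); heads of facts of `R` are dropped (their body `{t}` negates to `f`). -/
noncomputable def notProg {α : Type*} [Fintype α] [DecidableEq α]
    (R : Finset (Rule α)) : Finset (Rule α) :=
  Finset.univ.filter (fun t =>
    ((∀ s ∈ R, s.head ≠ t.head) ∧ t.pos = ∅ ∧ t.neg = ∅) ∨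
    ((∃ s ∈ R, s.head = t.head) ∧
      ∃ c : Rule α → α ⊕ α,
        (∀ s ∈ R, s.head = t.head →
          Sum.elim (fun b => b ∈ s.pos) (fun b => b ∈ s.neg) (c s)) ∧
        t.pos.image Sum.inl ∪ t.neg.image Sum.inr =
          (R.filter (fun s => s.head = t.head)).image (fun s => Sum.swap (c s))))

/-- Sequential composition of answer set programs. -/
noncomputable def comp {α : Type*} [Fintype α] [DecidableEq α]
    (P R : Finset (Rule α)) : Finset (Rule α) :=
  Finset.univ.filter (fun t => ∃ r ∈ P, ∃ S N : Finset (Rule α),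
    S ⊆ R ∧ N ⊆ notProg R ∧
    S.card = r.pos.card ∧ N.card = r.neg.card ∧
    S.image Rule.head = r.pos ∧ N.image Rule.head = r.neg ∧
    t.head = r.head ∧
    t.pos = (S ∪ N).sup Rule.pos ∧
    t.neg = (S ∪ N).sup Rule.neg)

/-- The unit program `1_A = {a ← a : a ∈ A}`. -/
def unitP (α : Type*) [Fintype α] [DecidableEq α] : Finset (Rule α) :=
  Finset.univ.image (fun a => (⟨a, {a}, ∅⟩ : Rule α))

/-- An interpretation viewed as a fact program. -/
def interp {α : Type*} [Fintype α] [DecidableEq α] (I : Finset α) : Finset (Rule α) :=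
  I.image (fun a => (⟨a, ∅, ∅⟩ : Rule α))

/-- The facts (rules with empty body) of a program. -/
noncomputable def factsOf {α : Type*} [Fintype α] [DecidableEq α]
    (P : Finset (Rule α)) : Finset (Rule α) :=
  P.filter (fun r => r.pos = ∅ ∧ r.neg = ∅)

/-- The van Emden–Kowalski immediate consequence operator. -/
noncomputable def TP {α : Type*} [Fintype α] [DecidableEq α]
    (P : Finset (Rule α)) (I : Finset α) : Finset α :=
  (P.filter (fun r => r.pos ⊆ I ∧ Disjoint r.neg I)).image Rule.head

lemma mem_interp_body {α : Type*} [Fintype α] [DecidableEq α] {I : Finset α}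
    {s : Rule α} (hs : s ∈ interp I) : s.pos = ∅ ∧ s.neg = ∅ := by
  simp only [interp, Finset.mem_image] at hs
  obtain ⟨a, _, rfl⟩ := hs
  exact ⟨rfl, rfl⟩

lemma mem_notProg_interp_body {α : Type*} [Fintype α] [DecidableEq α] {I : Finset α}
    {s : Rule α} (hs : s ∈ notProg (interp I)) : s.pos = ∅ ∧ s.neg = ∅ := by
  simp only [notProg, Finset.mem_filter, Finset.mem_univ, true_and] at hs
  rcases hs with ⟨_, h1, h2⟩ | ⟨⟨s', hs', hh⟩, c, hc, _⟩
  · exact ⟨h1, h2⟩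
  · exfalso
    have := hc s' hs' hh
    obtain ⟨hp, hn⟩ := mem_interp_body hs'
    cases h : c s' with
    | inl b => rw [h] at this; simp [hp] at this
    | inr b => rw [h] at this; simp [hn] at this

/-- the interpretations form a two-sided ideal of the composition magma:
both `I ∘ P` and `P ∘ I` are interpretations. -/
theorem interp_ideal {α : Type*} [Fintype α] [DecidableEq α]
    (I : Finset α) (P : Finset (Rule α)) :
    (∃ J : Finset α, comp (interp I) P = interp J) ∧
    (∃ J : Finset α, comp P (interp I) = interp J) := by
  constructor
  · refine ⟨I, ?_⟩
    ext t
    simp only [comp, Finset.mem_filter, Finset.mem_univ, true_and]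
    constructor
    · rintro ⟨r, hr, S, N, _, _, hSc, hNc, _, _, hhead, hpos, hneg⟩
      obtain ⟨hp, hn⟩ := mem_interp_body hr
      rw [hp, Finset.card_empty, Finset.card_eq_zero] at hSc
      rw [hn, Finset.card_empty, Finset.card_eq_zero] at hNc
      subst hSc hNc
      simp only [Finset.empty_union, Finset.sup_empty] at hpos hneg
      simp only [interp, Finset.mem_image] at hr ⊢
      obtain ⟨a, ha, hra⟩ := hr
      refine ⟨a, ha, ?_⟩
      obtain ⟨th, tp, tn⟩ := t
      simp only at hhead hpos hneg
      subst hhead hpos hneg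
      rw [← hra]
      rfl
    · intro ht
      obtain ⟨hp, hn⟩ := mem_interp_body ht
      refine ⟨t, ht, ∅, ∅, Finset.empty_subset _, Finset.empty_subset _, ?_, ?_, ?_, ?_, rfl, ?_, ?_⟩
      · simp [hp]
      · simp [hn]
      · simp [hp]
      · simp [hn]
      · simp [hp]
      · simp [hn]
  · refine ⟨(comp P (interp I)).image Rule.head, ?_⟩
    have hbody : ∀ t ∈ comp P (interp I), t.pos = ∅ ∧ t.neg = ∅ := by
      intro t ht
      simp only [comp, Finset.mem_filter, Finset.mem_univ, true_and] at ht
      obtain ⟨r, hr, S, N, hS, hN, _, _, _, _, _, hpos, hneg⟩ := ht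
      have hall : ∀ s ∈ S ∪ N, s.pos = ∅ ∧ s.neg = ∅ := by
        intro s hs
        rcases Finset.mem_union.mp hs with h | h
        · exact mem_interp_body (hS h)
        · exact mem_notProg_interp_body (hN h)
      constructor
      · rw [hpos]
        exact (Finset.sup_eq_bot_iff _ _).mpr (fun s hs => (hall s hs).1)
      · rw [hneg]
        exact (Finset.sup_eq_bot_iff _ _).mpr (fun s hs => (hall s hs).2)
    ext t
    simp only [interp, Finset.mem_image, exists_exists_and_eq_and]
    constructor
    · intro ht
      obtain ⟨hp, hn⟩ := hbody t ht
      refine ⟨t, ht, ?_⟩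
      cases t
      simp_all
    · rintro ⟨t', ht', rfl⟩
      obtain ⟨hp, hn⟩ := hbody t' ht'
      have : t' = ⟨t'.head, ∅, ∅⟩ := by cases t'; simp_all
      rwa [← this]
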